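/- arXiv:math/0409482 — 2 statements merged into one kernel-verified Lean document; each statement's English description precedes it below -/
import Mathlib

section
/- The automorphism group scheme Aut over 𝒪 of the standard complete periodic lattice chain for GL_n is formally smooth: for any 𝒪-algebra R with nilpotent ideal J ⊂ R, every automorphism of the lattice chain diagram Λ_• ⊗_𝒪 (R/J) lifts to an automorphism of Λ_• ⊗_𝒪 R. -/
/-!
Read entrywise, `g (i + 1) * m i = m i * g i` determines the entry `(j, k)` of `g (i + 1)` from
that of `g i` whenever `i ≠ k`: it is the same, times `π` when `i = j`. Going once around the
cycle from `k + 1` shows that, over any ring, the chain endomorphisms are exactly the families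
`chainEnd π A` attached to arbitrary matrices `A`. A chain endomorphism over `R ⧸ J` therefore
lifts by lifting `A` entrywise, and the lift is invertible because its determinant is a unit
modulo the nilpotent ideal `J`.
-/

section FinCyclic

open Fin.CommRing

variable {m : ℕ}

theorem Fin.cyclic_induction {P : Fin (m + 1) → Prop} (c : Fin (m + 1))
    (base : P (c + 1)) (step : ∀ i, i ≠ c → P i → P (i + 1)) (i : Fin (m + 1)) : P i := by
  have key : ∀ t : ℕ, t ≤ m → P (c + 1 + t) := by
    intro t ht
    induction t with
    | zero => simpa using base
    | succ t ih =>
      have hne : c + 1 + t ≠ c := by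
        intro h
        have h0 : ((t + 1 : ℕ) : Fin (m + 1)) = 0 := by
          push_cast
          linear_combination h
        have hle := Nat.le_of_dvd (Nat.succ_pos t) (Fin.natCast_eq_zero.mp h0)
        omega
      simpa [add_assoc] using step _ hne (ih (by omega))
  simpa using key ((i - (c + 1) : Fin (m + 1)) : ℕ) (Fin.is_le _)

theorem Fin.val_add_one_sub_of_ne {i k : Fin (m + 1)} (h : i ≠ k) :
    ((i + 1 - (k + 1) : Fin (m + 1)) : ℕ) = ((i - (k + 1) : Fin (m + 1)) : ℕ) + 1 := by
  have hlast : i - (k + 1) ≠ Fin.last m := by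
    intro h'
    exact h (by linear_combination h' + Fin.last_add_one m)
  rw [show i + 1 - (k + 1) = (i - (k + 1)) + 1 by ring, Fin.val_add_one, if_neg hlast]

theorem Fin.sub_add_one_lt_self_sub_add_one_iff (j k : Fin (m + 1)) :
    j - (k + 1) < k - (k + 1) ↔ j ≠ k := by
  have hk : k - (k + 1) = Fin.last m := by
    linear_combination -(Fin.last_add_one m)
  rw [hk, Fin.lt_last_iff_ne_last, ← hk, Ne, Ne, sub_left_inj]

end FinCyclic

theorem Matrix.isUnit_of_isUnit_map_quotient {ι R : Type*} [Fintype ι] [DecidableEq ι]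
    [CommRing R] {J : Ideal R} (hJ : IsNilpotent J) {A : Matrix ι ι R}
    (hA : IsUnit (A.map (Ideal.Quotient.mk J))) : IsUnit A := by
  rw [Matrix.isUnit_iff_isUnit_det] at hA ⊢
  rwa [← RingHom.mapMatrix_apply, ← RingHom.map_det, hJ.isUnit_quotient_mk_iff] at hA

namespace LatticeChain

variable {R S : Type*} [CommRing R] [CommRing S] {m : ℕ}

def transition (π : R) (i : Fin (m + 1)) : Matrix (Fin (m + 1)) (Fin (m + 1)) R :=
  Matrix.diagonal fun j => if j = i then π else 1

def IsChainEnd (π : R) (g : Fin (m + 1) → Matrix (Fin (m + 1)) (Fin (m + 1)) R) : Prop :=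
  ∀ i, g (i + 1) * transition π i = transition π i * g i

theorem isChainEnd_iff (π : R) (g : Fin (m + 1) → Matrix (Fin (m + 1)) (Fin (m + 1)) R) :
    IsChainEnd π g ↔ ∀ i j k,
      g (i + 1) j k * (if k = i then π else 1) = (if j = i then π else 1) * g i j k := by
  simp only [IsChainEnd, transition, Matrix.mul_diagonal, Matrix.diagonal_mul, ← Matrix.ext_iff]

theorem map_transition (f : R →+* S) (π : R) (i : Fin (m + 1)) :
    (transition π i).map f = transition (f π) i := by
  simp [transition, Matrix.diagonal_map, apply_ite f]

theorem IsChainEnd.apply_succ {π : R} {g : Fin (m + 1) → Matrix (Fin (m + 1)) (Fin (m + 1)) R}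
    (hg : IsChainEnd π g) {i k : Fin (m + 1)} (hik : i ≠ k) (j : Fin (m + 1)) :
    g (i + 1) j k = (if j = i then π else 1) * g i j k := by
  simpa [Ne.symm hik] using (isChainEnd_iff π g).1 hg i j k

/-- Entry `(j, k)` of the `i`-th matrix carries a factor `π` exactly when `i` lies in the
cyclic interval `(j, k]`; `x - (k + 1)` is the position of `x` counted from `k + 1`. -/
def chainEnd (π : R) (A : Matrix (Fin (m + 1)) (Fin (m + 1)) R) (i : Fin (m + 1)) :
    Matrix (Fin (m + 1)) (Fin (m + 1)) R :=
  Matrix.of fun j k => if j - (k + 1) < i - (k + 1) then π * A j k else A j k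

theorem chainEnd_succ_apply (π : R) (A : Matrix (Fin (m + 1)) (Fin (m + 1)) R)
    (j k : Fin (m + 1)) : chainEnd π A (k + 1) j k = A j k := by
  simp [chainEnd]

theorem isChainEnd_chainEnd (π : R) (A : Matrix (Fin (m + 1)) (Fin (m + 1)) R) :
    IsChainEnd π (chainEnd π A) := by
  rw [isChainEnd_iff]
  intro i j k
  by_cases hik : k = i
  · subst hik
    rw [chainEnd_succ_apply]
    simp only [chainEnd, Matrix.of_apply, Fin.sub_add_one_lt_self_sub_add_one_iff]
    by_cases hjk : j = k <;> simp [hjk, mul_comm]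
  · have hval := Fin.val_add_one_sub_of_ne (Ne.symm hik)
    simp only [chainEnd, Matrix.of_apply, if_neg hik, mul_one, Fin.lt_def, hval]
    by_cases hji : j = i
    · subst hji
      simp
    · have hval_ne : ((j - (k + 1) : Fin (m + 1)) : ℕ) ≠ ((i - (k + 1) : Fin (m + 1)) : ℕ) := by
        simpa [Fin.val_eq_val, sub_left_inj] using hji
      simp only [if_neg hji, one_mul]
      exact if_congr (by omega) rfl rfl

theorem IsChainEnd.eq_chainEnd {π : R} {g : Fin (m + 1) → Matrix (Fin (m + 1)) (Fin (m + 1)) R}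
    (hg : IsChainEnd π g) : g = chainEnd π (Matrix.of fun j k => g (k + 1) j k) := by
  funext i
  ext j k
  induction i using Fin.cyclic_induction k with
  | base => simp [chainEnd_succ_apply]
  | step i hik ih =>
    rw [hg.apply_succ hik, (isChainEnd_chainEnd _ _).apply_succ hik, ih]

theorem map_chainEnd (f : R →+* S) (π : R) (A : Matrix (Fin (m + 1)) (Fin (m + 1)) R)
    (i : Fin (m + 1)) : (chainEnd π A i).map f = chainEnd (f π) (A.map f) i := by
  ext j k
  simp [chainEnd, apply_ite f]

theorem exists_lift_of_isChainEnd {f : R →+* S} (hf : Function.Surjective f) {π : R}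
    {g' : Fin (m + 1) → Matrix (Fin (m + 1)) (Fin (m + 1)) S} (hg' : IsChainEnd (f π) g') :
    ∃ g, IsChainEnd π g ∧ ∀ i, (g i).map f = g' i := by
  set A' : Matrix (Fin (m + 1)) (Fin (m + 1)) S := Matrix.of fun j k => g' (k + 1) j k
  refine ⟨chainEnd π (A'.map (Function.surjInv hf)), isChainEnd_chainEnd _ _, fun i => ?_⟩
  rw [map_chainEnd, hg'.eq_chainEnd]
  congr
  ext j k
  simp [A', Function.surjInv_eq hf]

end LatticeChain

theorem stmt_7_general
    (O : Type*) [CommRing O]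
    (π : O)
    {n : ℕ} [NeZero n]
    (R : Type*) [CommRing R] [Algebra O R]
    (J : Ideal R) (hJ : ∃ k : ℕ, J ^ k = ⊥)
    (M : Fin n → Matrix (Fin n) (Fin n) R)
    (hM : ∀ i : Fin n,
      M i = Matrix.diagonal fun j => if j = i then algebraMap O R π else 1)
    (g0 : Fin n → GL (Fin n) (R ⧸ J))
    (hg0 : ∀ i : Fin n,
      (g0 (i + 1) : Matrix (Fin n) (Fin n) (R ⧸ J)) * (M i).map (Ideal.Quotient.mk J)
        = (M i).map (Ideal.Quotient.mk J) * (g0 i : Matrix (Fin n) (Fin n) (R ⧸ J))) :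
    ∃ g : Fin n → GL (Fin n) R,
      (∀ i : Fin n,
        (g (i + 1) : Matrix (Fin n) (Fin n) R) * M i
          = M i * (g i : Matrix (Fin n) (Fin n) R)) ∧
      ∀ i : Fin n,
        ((g i : Matrix (Fin n) (Fin n) R)).map (Ideal.Quotient.mk J)
          = (g0 i : Matrix (Fin n) (Fin n) (R ⧸ J)) := by
  obtain ⟨m, rfl⟩ := Nat.exists_eq_add_one_of_ne_zero (NeZero.ne n)
  obtain rfl : M = LatticeChain.transition (algebraMap O R π) := funext hM
  have hg0_chain : LatticeChain.IsChainEnd (Ideal.Quotient.mk J (algebraMap O R π))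
      fun i => (g0 i : Matrix (Fin (m + 1)) (Fin (m + 1)) (R ⧸ J)) := by
    simpa only [LatticeChain.IsChainEnd, LatticeChain.map_transition] using hg0
  obtain ⟨g, hg, hg_map⟩ :=
    LatticeChain.exists_lift_of_isChainEnd Ideal.Quotient.mk_surjective hg0_chain
  have hg_unit : ∀ i, IsUnit (g i) := fun i =>
    Matrix.isUnit_of_isUnit_map_quotient hJ (by rw [hg_map]; exact (g0 i).isUnit)
  exact ⟨fun i => (hg_unit i).unit, hg, hg_map⟩

/-- The automorphism group scheme `Aut` over a complete discrete
valuation ring `𝒪` of the standard complete periodic lattice chain for `GL_n`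
is formally smooth: for any `𝒪`-algebra `R` with a nilpotent ideal `J ⊆ R`,
every automorphism of the chain `Λ_• ⊗ (R/J)` lifts to an automorphism of
`Λ_• ⊗ R`.  Each `Λ_i` is identified with `𝒪ⁿ`, the transition maps being the
diagonal matrices `m_i = diag(1, …, π, …, 1)` (with `π` in the `i`-th place,
cyclically); an automorphism of the chain over `R` is a tuple
`(g_i)_{i ∈ ℤ/n}` of invertible matrices with `g_{i+1} m_i = m_i g_i`. -/
theorem stmt_7
    (O : Type*) [CommRing O] [IsDomain O] [IsDiscreteValuationRing O]
    [IsAdicComplete (IsLocalRing.maximalIdeal O) O]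
    (π : O) (hπ : Irreducible π)
    {n : ℕ} [NeZero n]
    (R : Type*) [CommRing R] [Algebra O R]
    (J : Ideal R) (hJ : ∃ k : ℕ, J ^ k = ⊥)
    (M : Fin n → Matrix (Fin n) (Fin n) R)
    (hM : ∀ i : Fin n,
      M i = Matrix.diagonal fun j => if j = i then algebraMap O R π else 1)
    (g0 : Fin n → GL (Fin n) (R ⧸ J))
    (hg0 : ∀ i : Fin n,
      (g0 (i + 1) : Matrix (Fin n) (Fin n) (R ⧸ J)) * (M i).map (Ideal.Quotient.mk J)
        = (M i).map (Ideal.Quotient.mk J) * (g0 i : Matrix (Fin n) (Fin n) (R ⧸ J))) :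
    ∃ g : Fin n → GL (Fin n) R,
      (∀ i : Fin n,
        (g (i + 1) : Matrix (Fin n) (Fin n) R) * M i
          = M i * (g i : Matrix (Fin n) (Fin n) R)) ∧
      ∀ i : Fin n,
        ((g i : Matrix (Fin n) (Fin n) R)).map (Ideal.Quotient.mk J)
          = (g0 i : Matrix (Fin n) (Fin n) (R ⧸ J)) :=
  stmt_7_general O π R J hJ M hM g0 hg0
end

section
/- The special fiber of the group scheme Aut of automorphisms of the standard complete lattice chain for GL_n is connected: the map Aut_k → Aut(Λ₀ ⊗ k) ≅ GL_{n,k}, g_• ↦ g₀, has image the Borel subgroup B_k of upper triangular matrices, and its kernel is a connected unipotent group; hence Aut_k is an extension of B_k by a connected unipotent group. -/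
/-- A tuple `(g_i)_{i ∈ ℤ/n}` of matrices is an automorphism of the standard
complete lattice chain (with transition matrices `M i`) if each `g_i` is
invertible and `g_{i+1} M_i = M_i g_i`. -/
def ChainAutTuple {k : Type*} [Field k] {n : ℕ} [NeZero n]
    (M : Fin n → Matrix (Fin n) (Fin n) k)
    (g : Fin n → Matrix (Fin n) (Fin n) k) : Prop :=
  (∀ i, IsUnit (g i)) ∧ ∀ i, g (i + 1) * M i = M i * g i

section Aux

variable {k : Type*} [Field k] {n : ℕ} [NeZero n]

lemma fin_mk_add_one {m : ℕ} (h : m + 1 < n) (hm : m < n) :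
    (⟨m, hm⟩ : Fin n) + 1 = ⟨m + 1, h⟩ := by
  apply Fin.ext
  simp [Fin.add_def, Fin.val_one', Nat.mod_eq_of_lt, h]

lemma fin_last_add_one (h : n - 1 < n) : (⟨n - 1, h⟩ : Fin n) + 1 = 0 := by
  rcases Nat.lt_or_ge 1 n with h1 | h1
  · apply Fin.ext
    rw [Fin.add_def]
    simp [Fin.val_one', Nat.mod_eq_of_lt h1, Nat.sub_add_cancel (Nat.one_le_of_lt h1),
      Nat.mod_self]
  · have hn : n = 1 := by have := NeZero.pos n; omega
    subst hn
    exact Subsingleton.elim _ _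

variable {M g : Fin n → Matrix (Fin n) (Fin n) k}

/-- Entrywise form of the chain relations. -/
lemma rel_entry (hM : ∀ i : Fin n, M i = Matrix.diagonal fun j => if j = i then 0 else 1)
    (hrel : ∀ i, g (i + 1) * M i = M i * g i) (i a b : Fin n) :
    g (i + 1) a b * (if b = i then (0 : k) else 1)
      = (if a = i then (0 : k) else 1) * g i a b := by
  have h := hrel i
  rw [hM i] at h
  have h2 := congrFun (congrFun h a) b
  simpa [Matrix.mul_diagonal, Matrix.diagonal_mul] using h2

lemma rel_E1 (hM : ∀ i : Fin n, M i = Matrix.diagonal fun j => if j = i then 0 else 1)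
    (hrel : ∀ i, g (i + 1) * M i = M i * g i) {i a : Fin n} (ha : a ≠ i) :
    g i a i = 0 := by
  have := rel_entry hM hrel i a i
  simpa [ha] using this.symm

lemma rel_E2 (hM : ∀ i : Fin n, M i = Matrix.diagonal fun j => if j = i then 0 else 1)
    (hrel : ∀ i, g (i + 1) * M i = M i * g i) {i b : Fin n} (hb : b ≠ i) :
    g (i + 1) i b = 0 := by
  have := rel_entry hM hrel i i b
  simpa [hb] using this

lemma rel_E3 (hM : ∀ i : Fin n, M i = Matrix.diagonal fun j => if j = i then 0 else 1)
    (hrel : ∀ i, g (i + 1) * M i = M i * g i) {i a b : Fin n} (ha : a ≠ i) (hb : b ≠ i) :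
    g (i + 1) a b = g i a b := by
  have := rel_entry hM hrel i a b
  simpa [ha, hb] using this

/-- Walking along the chain: the `(a,b)` entry is unchanged by transitions that
avoid the indices `a` and `b`. -/
lemma walk (hM : ∀ i : Fin n, M i = Matrix.diagonal fun j => if j = i then 0 else 1)
    (hrel : ∀ i, g (i + 1) * M i = M i * g i) (a b : Fin n) (m₁ : ℕ) (h₁ : m₁ < n) :
    ∀ m₂ (_ : m₁ ≤ m₂) (h₂ : m₂ < n),
      (∀ t, m₁ ≤ t → t < m₂ → t ≠ (a : ℕ) ∧ t ≠ (b : ℕ)) →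
      g ⟨m₂, h₂⟩ a b = g ⟨m₁, h₁⟩ a b := by
  intro m₂
  induction m₂ with
  | zero =>
    intro hle h₂ _
    have : m₁ = 0 := Nat.le_zero.mp hle
    subst this; rfl
  | succ m ih =>
    intro hle h₂ hav
    rcases Nat.lt_or_ge m₁ (m + 1) with h | h
    · have hm : m₁ ≤ m := Nat.lt_succ_iff.mp h
      have hmn : m < n := Nat.lt_of_succ_lt h₂
      have hstep : (⟨m, hmn⟩ : Fin n) + 1 = ⟨m + 1, h₂⟩ := fin_mk_add_one h₂ hmn
      have hav' := hav m hm (Nat.lt_succ_self m)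
      have ha : a ≠ (⟨m, hmn⟩ : Fin n) := by
        intro hc; exact hav'.1 (by rw [hc])
      have hb : b ≠ (⟨m, hmn⟩ : Fin n) := by
        intro hc; exact hav'.2 (by rw [hc])
      rw [← hstep, rel_E3 hM hrel ha hb]
      exact ih hm hmn fun t ht1 ht2 => hav t ht1 (Nat.lt_succ_of_lt ht2)
    · have : m₁ = m + 1 := le_antisymm hle h
      subst this; rfl

/-- The image of the restriction map is contained in upper triangular matrices. -/
lemma image_upper (hM : ∀ i : Fin n, M i = Matrix.diagonal fun j => if j = i then 0 else 1)
    (hrel : ∀ i, g (i + 1) * M i = M i * g i) {a b : Fin n} (hab : (b : ℕ) < (a : ℕ)) :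
    g 0 a b = 0 := by
  have h0 : (0 : ℕ) < n := NeZero.pos n
  have hzero : (⟨0, h0⟩ : Fin n) = (0 : Fin n) := by apply Fin.ext; simp
  have hw := walk hM hrel a b 0 h0 (b : ℕ) (Nat.zero_le _) b.isLt
    (fun t _ ht2 => ⟨by omega, by omega⟩)
  have hb : (⟨(b : ℕ), b.isLt⟩ : Fin n) = b := Fin.eta b b.isLt
  rw [hzero, hb] at hw
  have hne : a ≠ b := by intro hc; rw [hc] at hab; exact lt_irrefl _ hab
  rw [← hw]
  exact rel_E1 hM hrel hne

/-- Structure of kernel elements: `g i` equals the identity except on entries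
`(a, b)` with `b < i ≤ a`. -/
lemma ker_entry (hM : ∀ i : Fin n, M i = Matrix.diagonal fun j => if j = i then 0 else 1)
    (hrel : ∀ i, g (i + 1) * M i = M i * g i) (hg0 : g 0 = 1) (i a b : Fin n)
    (h : ¬ ((b : ℕ) < (i : ℕ) ∧ (i : ℕ) ≤ (a : ℕ))) :
    g i a b = (1 : Matrix (Fin n) (Fin n) k) a b := by
  have h0 : (0 : ℕ) < n := NeZero.pos n
  have hzero : (⟨0, h0⟩ : Fin n) = (0 : Fin n) := by apply Fin.ext; simp
  have hi : (⟨(i : ℕ), i.isLt⟩ : Fin n) = i := Fin.eta i i.isLt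
  rcases Nat.lt_or_ge (a : ℕ) (i : ℕ) with hai | hai
  · rcases Nat.lt_or_ge (b : ℕ) (i : ℕ) with hbi | hbi
    · -- both below i : walk up to n-1, then wrap to 0
      have hn1 : n - 1 < n := Nat.sub_lt (NeZero.pos n) Nat.one_pos
      have hw := walk hM hrel a b (i : ℕ) i.isLt (n - 1)
        (by omega) hn1 (fun t ht1 _ => ⟨by omega, by omega⟩)
      rw [hi] at hw
      have hwrap : (⟨n - 1, hn1⟩ : Fin n) + 1 = 0 := fin_last_add_one hn1
      have ha' : a ≠ (⟨n - 1, hn1⟩ : Fin n) := by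
        intro hc
        have : (a : ℕ) = n - 1 := by rw [hc]
        omega
      have hb' : b ≠ (⟨n - 1, hn1⟩ : Fin n) := by
        intro hc
        have : (b : ℕ) = n - 1 := by rw [hc]
        omega
      have := rel_E3 hM hrel (i := ⟨n - 1, hn1⟩) ha' hb'
      rw [hwrap, hg0] at this
      rw [this, hw]
    · -- a < i ≤ b : entry vanishes, and so does the identity entry
      have hne : a ≠ b := by
        intro hc
        rw [hc] at hai
        omega
      have hone : (1 : Matrix (Fin n) (Fin n) k) a b = 0 := Matrix.one_apply_ne hne
      rw [hone]
      have han : (a : ℕ) + 1 < n := by omega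
      have hstep : a + 1 = (⟨(a : ℕ) + 1, han⟩ : Fin n) := by
        rw [← fin_mk_add_one han a.isLt, Fin.eta]
      have hba : b ≠ a := fun hc => hne hc.symm
      have hE2 := rel_E2 hM hrel (i := a) hba
      rw [hstep] at hE2
      have hw := walk hM hrel a b ((a : ℕ) + 1) han (i : ℕ)
        (by omega) i.isLt (fun t ht1 ht2 => ⟨by omega, by omega⟩)
      rw [hi] at hw
      rw [hw, hE2]
  · rcases Nat.lt_or_ge (b : ℕ) (i : ℕ) with hbi | hbi
    · exact absurd ⟨hbi, hai⟩ h
    · -- both ≥ i : walk down to 0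
      have hw := walk hM hrel a b 0 h0 (i : ℕ) (Nat.zero_le _) i.isLt
        (fun t _ ht2 => ⟨by omega, by omega⟩)
      rw [hi, hzero, hg0] at hw
      exact hw

/-- Kernel elements have square-zero deviation from the identity. -/
lemma ker_sq (hM : ∀ i : Fin n, M i = Matrix.diagonal fun j => if j = i then 0 else 1)
    (hrel : ∀ i, g (i + 1) * M i = M i * g i) (hg0 : g 0 = 1) (i : Fin n) :
    (g i - 1) * (g i - 1) = 0 := by
  ext a b
  rw [Matrix.mul_apply]
  apply Finset.sum_eq_zero
  intro c _
  rcases Nat.lt_or_ge (c : ℕ) (i : ℕ) with hc | hc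
  · have h2 : (g i - 1) c b = 0 := by
      have := ker_entry hM hrel hg0 i c b (by omega)
      simp [Matrix.sub_apply, this]
    rw [h2, mul_zero]
  · have h1 : (g i - 1) a c = 0 := by
      have := ker_entry hM hrel hg0 i a c (by omega)
      simp [Matrix.sub_apply, this]
    rw [h1, zero_mul]

/-- Construction of a chain automorphism tuple from an invertible upper
triangular matrix: `g i` is the matrix `A` with the off-diagonal blocks
determined by the threshold `i` set to zero. -/
lemma construct {M : Fin n → Matrix (Fin n) (Fin n) k}
    (hM : ∀ i : Fin n, M i = Matrix.diagonal fun j => if j = i then 0 else 1)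
    (A : Matrix (Fin n) (Fin n) k) (hA : IsUnit A)
    (hupper : ∀ a b : Fin n, (b : ℕ) < (a : ℕ) → A a b = 0) :
    ∃ g, ChainAutTuple M g ∧ g 0 = A := by
  have hunit : ∀ i : Fin n, IsUnit (Matrix.of fun (a b : Fin n) =>
      if ((a : ℕ) < (i : ℕ) ↔ (b : ℕ) < (i : ℕ)) then A a b else (0 : k)) := by
    intro i
    rw [Matrix.isUnit_iff_isUnit_det]
    have htri : Matrix.BlockTriangular (Matrix.of fun (a b : Fin n) =>
        if ((a : ℕ) < (i : ℕ) ↔ (b : ℕ) < (i : ℕ)) then A a b else (0 : k)) id := by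
      intro p q hpq
      simp only [Matrix.of_apply]
      split_ifs with hc
      · exact hupper p q hpq
      · rfl
    have htriA : Matrix.BlockTriangular A id := fun p q hpq => hupper p q hpq
    rw [Matrix.det_of_upperTriangular htri]
    have hdetA : A.det = ∏ a, A a a := Matrix.det_of_upperTriangular htriA
    have hprod : (∏ a, (Matrix.of fun (a b : Fin n) =>
        if ((a : ℕ) < (i : ℕ) ↔ (b : ℕ) < (i : ℕ)) then A a b else (0 : k)) a a)
        = ∏ a, A a a := by
      apply Finset.prod_congr rfl
      intro a _
      simp
    rw [hprod, ← hdetA]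
    exact (Matrix.isUnit_iff_isUnit_det A).mp hA
  refine ⟨fun i => Matrix.of fun (a b : Fin n) =>
    if ((a : ℕ) < (i : ℕ) ↔ (b : ℕ) < (i : ℕ)) then A a b else (0 : k),
    ⟨fun i => hunit i, ?_⟩, ?_⟩
  · -- the chain relations
    intro i
    rw [hM i]
    ext a b
    have hab : (a : ℕ) < n := a.isLt
    have hbb : (b : ℕ) < n := b.isLt
    have hin : (i : ℕ) < n := i.isLt
    have hw : ((i + 1 : Fin n) : ℕ) = (i : ℕ) + 1 ∨
        ((i : ℕ) = n - 1 ∧ ((i + 1 : Fin n) : ℕ) = 0) := by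
      rcases Nat.lt_or_ge ((i : ℕ) + 1) n with h | h
      · left
        have h2 : (⟨(i : ℕ), i.isLt⟩ : Fin n) + 1 = ⟨(i : ℕ) + 1, h⟩ := fin_mk_add_one h i.isLt
        rw [Fin.eta] at h2
        rw [h2]
      · right
        have hi : (i : ℕ) = n - 1 := by omega
        refine ⟨hi, ?_⟩
        have hlast : i = (⟨n - 1, Nat.sub_lt (NeZero.pos n) Nat.one_pos⟩ : Fin n) := by
          apply Fin.ext; simp [hi]
        rw [hlast, fin_last_add_one]
        simp
    simp only [Matrix.mul_diagonal, Matrix.diagonal_mul, Matrix.of_apply, Fin.ext_iff]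
    split_ifs <;>
      simp only [mul_zero, zero_mul, mul_one, one_mul] <;>
      first
        | rfl
        | (exfalso; omega)
        | exact hupper a b (by omega)
        | exact (hupper a b (by omega)).symm
  · -- g 0 = A
    ext a b
    simp

end Aux

/-- The special fiber `Aut_k` of the automorphism group scheme of
the standard complete lattice chain for `GL_n` is connected: the map
`Aut_k → GL_{n,k}`, `g_• ↦ g₀`, has image the Borel subgroup `B_k` of upper
triangular matrices; its kernel is unipotent (each component of a kernel
element is a unipotent matrix); and the kernel is connected (every kernel
element is joined to the identity by the affine line
`t ↦ (1 + t(g_i − 1))_i`, which stays inside the kernel).  Hence `Aut_k` is an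
extension of `B_k` by a connected unipotent group.  (In the special fiber the
transition matrices are `m_i = diag(1, …, 0, …, 1)`, since `π ↦ 0`.) -/
theorem stmt_8
    (k : Type*) [Field k] {n : ℕ} [NeZero n]
    (M : Fin n → Matrix (Fin n) (Fin n) k)
    (hM : ∀ i : Fin n, M i = Matrix.diagonal fun j => if j = i then 0 else 1) :
    ({A : Matrix (Fin n) (Fin n) k | ∃ g, ChainAutTuple M g ∧ g 0 = A}
        = {A | IsUnit A ∧ ∀ i j : Fin n, (j : ℕ) < (i : ℕ) → A i j = 0}) ∧
    (∀ g, ChainAutTuple M g → g 0 = 1 → ∀ i, IsNilpotent (g i - 1)) ∧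
    (∀ g, ChainAutTuple M g → g 0 = 1 → ∀ t : k,
      ChainAutTuple M (fun i => 1 + t • (g i - 1)) ∧
        (1 + t • (g 0 - 1) : Matrix (Fin n) (Fin n) k) = 1) := by
  refine ⟨?_, ?_, ?_⟩
  · ext A
    constructor
    · rintro ⟨g, ⟨hunit, hrel⟩, rfl⟩
      exact ⟨hunit 0, fun a b hab => image_upper hM hrel hab⟩
    · rintro ⟨hA, hupper⟩
      exact construct hM A hA hupper
  · rintro g ⟨hunit, hrel⟩ hg0 i
    exact ⟨2, by rw [pow_two]; exact ker_sq hM hrel hg0 i⟩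
  · rintro g ⟨hunit, hrel⟩ hg0 t
    refine ⟨⟨fun i => ?_, fun i => ?_⟩, ?_⟩
    · -- units
      show IsUnit (1 + t • (g i - 1))
      set N := t • (g i - 1) with hN
      have hN2 : N * N = 0 := by
        rw [hN, Matrix.smul_mul, Matrix.mul_smul, ker_sq hM hrel hg0 i, smul_zero, smul_zero]
      refine isUnit_iff_exists.mpr ⟨1 - N, ?_, ?_⟩
      · have h1 : (1 + N) * (1 - N) = 1 - N * N := by noncomm_ring
        rw [h1, hN2, sub_zero]
      · have h1 : (1 - N) * (1 + N) = 1 - N * N := by noncomm_ring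
        rw [h1, hN2, sub_zero]
    · -- relations
      show (1 + t • (g (i + 1) - 1)) * M i = M i * (1 + t • (g i - 1))
      have hkey : (g (i + 1) - 1) * M i = M i * (g i - 1) := by
        rw [sub_mul, mul_sub, hrel i, one_mul, mul_one]
      calc (1 + t • (g (i + 1) - 1)) * M i
          = M i + t • ((g (i + 1) - 1) * M i) := by
            rw [add_mul, one_mul, Matrix.smul_mul]
        _ = M i + t • (M i * (g i - 1)) := by rw [hkey]
        _ = M i * (1 + t • (g i - 1)) := by rw [mul_add, mul_one, Matrix.mul_smul]
    · rw [hg0]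
      simp
end
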